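/- For 0 ≤ β₁ < β₂, the solutions of IVP(β₁) and IVP(β₂) satisfy v_{β₁}(x) < v_{β₂}(x) for all x > 0; that is, for each fixed x > 0 the map β ↦ v_β(x) is strictly increasing on [0,∞). -/

import Mathlib

/-! The difference `w = v_{β₂} − v_{β₁}` solves the linear equation
`(σ²/2) w′ = (β₂ − β₁) + (αh/4 (v_{β₁} + v_{β₂}) + η y − a) w` with `w(0) = 0`, because the
quadratic terms factor as `v₂² − v₁² = (v₁ + v₂) w`. Multiplying by the integrating factor
`exp (−∫₀ʸ g)`, with `g` the coefficient of `w`, turns `w` into a function whose derivative is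
`(β₂ − β₁)/(σ²/2)` times a positive factor, hence strictly increasing from `0`. -/

open Set Filter

noncomputable section

/-- `IsIVP σ η αh h r a β v v'` says that `v : [0,∞) → ℝ` is a C¹ solution
(with derivative `v'`) of the initial value problem IVP(β):
`(σ²/2)·v′(y) = β + (αh/4)·v(y)² + η·y·(v(y) − h/η) − a·v(y)` for `y ≥ 0`, `v(0) = −r`. -/
def IsIVP (σ η αh h r a β : ℝ) (v v' : ℝ → ℝ) : Prop :=
  ContinuousOn v' (Set.Ici 0) ∧
  (∀ y ∈ Set.Ici (0:ℝ), HasDerivWithinAt v (v' y) (Set.Ici 0) y) ∧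
  (∀ y ∈ Set.Ici (0:ℝ),
    σ ^ 2 / 2 * v' y = β + αh / 4 * (v y) ^ 2 + η * y * (v y - h / η) - a * v y) ∧
  v 0 = -r

theorem ContinuousOn.exists_hasDerivWithinAt_Ici {g : ℝ → ℝ} {a : ℝ}
    (hg : ContinuousOn g (Ici a)) :
    ∃ G : ℝ → ℝ, ∀ y ∈ Ici a, HasDerivWithinAt G (g y) (Ici a) y := by
  have hext : Continuous fun t => g (max t a) :=
    hg.comp_continuous (continuous_id.max continuous_const) fun t => le_max_right t a
  refine ⟨fun y => ∫ t in a..y, g (max t a), fun y hy => ?_⟩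
  have hderiv := (hext.integral_hasStrictDerivAt a y).hasDerivAt.hasDerivWithinAt (s := Ici a)
  rwa [max_eq_left (mem_Ici.mp hy)] at hderiv

theorem pos_of_hasDerivWithinAt_Ici_of_mul_lt {w w' g : ℝ → ℝ}
    (hg : ContinuousOn g (Ici 0))
    (hw : ∀ y ∈ Ici (0 : ℝ), HasDerivWithinAt w (w' y) (Ici 0) y)
    (hlt : ∀ y > 0, g y * w y < w' y) (hw₀ : 0 ≤ w 0) {x : ℝ} (hx : 0 < x) :
    0 < w x := by
  obtain ⟨G, hG⟩ := hg.exists_hasDerivWithinAt_Ici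
  set u : ℝ → ℝ := fun y => w y * Real.exp (-G y)
  have hu : ∀ y ∈ Ici (0 : ℝ),
      HasDerivWithinAt u ((w' y - g y * w y) * Real.exp (-G y)) (Ici 0) y := by
    intro y hy
    refine ((hw y hy).mul (hG y hy).fun_neg.exp).congr_deriv ?_
    ring
  have hmono : StrictMonoOn u (Ici 0) := by
    refine strictMonoOn_of_hasDerivWithinAt_pos (convex_Ici 0)
      (fun y hy => (hu y hy).continuousWithinAt)
      (fun y hy => (hu y (interior_subset hy)).mono interior_subset) (fun y hy => ?_)
    rw [interior_Ici] at hy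
    exact mul_pos (sub_pos.mpr (hlt y hy)) (Real.exp_pos _)
  have hu₀ : 0 ≤ u 0 := mul_nonneg hw₀ (Real.exp_pos _).le
  have hux : 0 < w x * Real.exp (-G x) := hu₀.trans_lt (hmono self_mem_Ici hx.le hx)
  exact pos_of_mul_pos_left hux (Real.exp_pos _).le

namespace IsIVP

variable {σ η αh h r a β β₁ β₂ : ℝ} {v v' v₁ v₁' v₂ v₂' : ℝ → ℝ}

theorem continuousOn (hv : IsIVP σ η αh h r a β v v') : ContinuousOn v (Ici 0) :=
  fun y hy => (hv.2.1 y hy).continuousWithinAt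

theorem sub_deriv_eq (hv₁ : IsIVP σ η αh h r a β₁ v₁ v₁') (hv₂ : IsIVP σ η αh h r a β₂ v₂ v₂')
    {y : ℝ} (hy : y ∈ Ici 0) :
    σ ^ 2 / 2 * (v₂' y - v₁' y) =
      β₂ - β₁ + (αh / 4 * (v₁ y + v₂ y) + η * y - a) * (v₂ y - v₁ y) := by
  linear_combination hv₂.2.2.1 y hy - hv₁.2.2.1 y hy

end IsIVP

theorem stmt_11_general (σ η αh h r a : ℝ) (hσ : 0 < σ)
    (β₁ β₂ : ℝ) (hβ₁₂ : β₁ < β₂)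
    (v₁ v₁' v₂ v₂' : ℝ → ℝ)
    (hIVP₁ : IsIVP σ η αh h r a β₁ v₁ v₁')
    (hIVP₂ : IsIVP σ η αh h r a β₂ v₂ v₂') :
    ∀ x : ℝ, 0 < x → v₁ x < v₂ x := by
  intro x hx
  have hσ2 : 0 < σ ^ 2 / 2 := by positivity
  set g : ℝ → ℝ := fun y => (αh / 4 * (v₁ y + v₂ y) + η * y - a) / (σ ^ 2 / 2)
  have hg : ContinuousOn g (Ici 0) :=
    ((continuousOn_const.mul (hIVP₁.continuousOn.add hIVP₂.continuousOn)).add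
      (continuousOn_const.mul continuousOn_id)).sub continuousOn_const |>.div_const _
  have hlt : ∀ y > 0, g y * (v₂ y - v₁ y) < v₂' y - v₁' y := by
    intro y hy
    have hsub := hIVP₁.sub_deriv_eq hIVP₂ (mem_Ici.mpr hy.le)
    rw [div_mul_eq_mul_div, div_lt_iff₀' hσ2, hsub]
    linarith
  have hw₀ : 0 ≤ v₂ 0 - v₁ 0 := by rw [hIVP₁.2.2.2, hIVP₂.2.2.2, sub_self]
  exact sub_pos.mp <| pos_of_hasDerivWithinAt_Ici_of_mul_lt hg
    (fun y hy => (hIVP₂.2.1 y hy).sub (hIVP₁.2.1 y hy)) hlt hw₀ hx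

/-- For `0 ≤ β₁ < β₂`, the solutions satisfy `v_{β₁}(x) < v_{β₂}(x)` for all `x > 0`:
`β ↦ v_β(x)` is strictly increasing. -/
theorem stmt_11 (σ η αh h r a : ℝ) (hσ : 0 < σ) (hη : 0 < η) (hαh : 0 < αh)
    (hh : 0 < h) (hr : 0 < r)
    (β₁ β₂ : ℝ) (hβ₁ : 0 ≤ β₁) (hβ₁₂ : β₁ < β₂)
    (v₁ v₁' v₂ v₂' : ℝ → ℝ)
    (hIVP₁ : IsIVP σ η αh h r a β₁ v₁ v₁')
    (hIVP₂ : IsIVP σ η αh h r a β₂ v₂ v₂') :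
    ∀ x : ℝ, 0 < x → v₁ x < v₂ x :=
  stmt_11_general σ η αh h r a hσ β₁ β₂ hβ₁₂ v₁ v₁' v₂ v₂' hIVP₁ hIVP₂
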